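/- Let V be a ℚ-vector space with a nondegenerate symmetric (or skew-symmetric) bilinear form, G a group acting on V preserving the form, and suppose the G-action on V is generated by transvections of Picard–Lefschetz type: there is a family of vectors δ_i ∈ V, all conjugate under G, spanning V, with generators g_i of the action satisfying g_i(α) = α + ε⟨α, δ_i⟩δ_i for a fixed sign ε. Then the G-representation V is irreducible: any nonzero G-invariant subspace equals V. -/

import Mathlib

/-! A nonzero invariant subspace `W` contains some `w` with `⟨w, δ i⟩ ≠ 0`, because the `δ`'s
span `V` and the form is nondegenerate. Then `g i w - w = ε⟨w, δ i⟩ δ i` lies in `W`, so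
`δ i ∈ W`; as every `δ j` is `± h δ i` for some `h ∈ G`, all the `δ j` lie in `W`, and they
span `V`. -/

theorem LinearMap.SeparatingLeft.exists_ne_zero_of_span_eq_top {R M₁ M₂ N ι : Type*}
    [CommSemiring R] [AddCommMonoid M₁] [AddCommMonoid M₂] [AddCommMonoid N]
    [Module R M₁] [Module R M₂] [Module R N] {B : M₁ →ₗ[R] M₂ →ₗ[R] N} (hB : B.SeparatingLeft)
    {δ : ι → M₂} (hspan : Submodule.span R (Set.range δ) = ⊤) {w : M₁} (hw : w ≠ 0) :
    ∃ i, B w (δ i) ≠ 0 := by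
  by_contra! h
  exact hw <| hB w fun y ↦ by
    rw [LinearMap.ext_on_range hspan (f := B w) (g := 0) h, LinearMap.zero_apply]

theorem Submodule.mem_of_add_smul_mem {K M : Type*} [DivisionRing K] [AddCommGroup M]
    [Module K M] (p : Submodule K M) {w d : M} {c : K} (hw : w ∈ p) (hc : c ≠ 0)
    (h : w + c • d ∈ p) : d ∈ p :=
  (p.smul_mem_iff hc).mp ((p.add_mem_iff_right hw).mp h)

theorem stmt2_general {G V ι : Type*} [Group G] [AddCommGroup V] [Module ℚ V]
    (ρ : Representation ℚ G V) (B : LinearMap.BilinForm ℚ V)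
    (hnondeg : ∀ v : V, (∀ w : V, B v w = 0) → v = 0)
    (δ : ι → V) (hspan : Submodule.span ℚ (Set.range δ) = ⊤)
    (g : ι → G) (ε : ℤ) (hε : ε = 1 ∨ ε = -1)
    (hPL : ∀ (i : ι) (α : V), ρ (g i) α = α + ε • (B α (δ i)) • δ i)
    (hconj : ∀ i j : ι, ∃ h : G, ρ h (δ i) = δ j ∨ ρ h (δ i) = -δ j) :
    ∀ W : Submodule ℚ V, (∀ (γ : G), ∀ w ∈ W, ρ γ w ∈ W) → W ≠ ⊥ → W = ⊤ := by
  intro W hinv hne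
  obtain ⟨w, hwW, hw0⟩ := W.exists_mem_ne_zero_of_ne_bot hne
  obtain ⟨i, hi⟩ := LinearMap.SeparatingLeft.exists_ne_zero_of_span_eq_top hnondeg hspan hw0
  have hc : (ε : ℚ) * B w (δ i) ≠ 0 :=
    mul_ne_zero (by rcases hε with rfl | rfl <;> norm_num) hi
  have hδi : δ i ∈ W := W.mem_of_add_smul_mem hwW hc <| by
    simpa only [hPL, mul_smul, Int.cast_smul_eq_zsmul] using hinv (g i) w hwW
  have hδ : ∀ j, δ j ∈ W := fun j ↦ by
    obtain ⟨h, hh | hh⟩ := hconj i j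
    · exact hh ▸ hinv h _ hδi
    · exact W.neg_mem_iff.mp (hh ▸ hinv h _ hδi)
  rw [eq_top_iff, ← hspan, Submodule.span_le]
  rintro _ ⟨j, rfl⟩
  exact hδ j

/-- A group `G` acting on a `ℚ`-vector space `V` with a nondegenerate
bilinear form, generated by Picard–Lefschetz transvections `g i : α ↦ α + ε⟨α,δ i⟩δ i`
along a family of vanishing cycles `δ i` which span `V` and are all conjugate up to sign
under the action, acts irreducibly: any nonzero `G`-invariant subspace is all of `V`. -/
theorem stmt2 {G V ι : Type*} [Group G] [AddCommGroup V] [Module ℚ V]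
    (ρ : Representation ℚ G V) (B : LinearMap.BilinForm ℚ V)
    (hpres : ∀ (g : G) (x y : V), B (ρ g x) (ρ g y) = B x y)
    (hnondeg : ∀ v : V, (∀ w : V, B v w = 0) → v = 0)
    (δ : ι → V) (hspan : Submodule.span ℚ (Set.range δ) = ⊤)
    (g : ι → G) (ε : ℤ) (hε : ε = 1 ∨ ε = -1)
    (hPL : ∀ (i : ι) (α : V), ρ (g i) α = α + ε • (B α (δ i)) • δ i)
    (hgen : Subgroup.closure (Set.range g) = ⊤)
    (hconj : ∀ i j : ι, ∃ h : G, ρ h (δ i) = δ j ∨ ρ h (δ i) = -δ j) :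
    ∀ W : Submodule ℚ V, (∀ (γ : G), ∀ w ∈ W, ρ γ w ∈ W) → W ≠ ⊥ → W = ⊤ :=
  stmt2_general ρ B hnondeg δ hspan g ε hε hPL hconj
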